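/- arXiv:1906.07600 — 2 statements merged into one kernel-verified Lean document; each statement's English description precedes it below -/
import Mathlib

section
/- Let f, g : 2^ω → ℝ with g Baire 1, let p, q be rationals, ε, δ positive rationals, and let k : 2^ω → 2^ω be continuous, such that for every A ∈ 2^ω and every bit b, if b is a correct answer to 'g(k(A)) ≲_δ q' then b is a correct answer to 'f(A) ≲_ε p'. Then P^ν_{f,p,ε} ⊆ k⁻¹(P^ν_{g,q,δ}) for every ordinal ν; in particular the sequence (P^ν_{f,p,ε}) reaches the empty set and α(f,p,ε) ≤ α(g,q,δ). Consequently, if f is also Baire 1 and f ≤_m g, then |f|_α ≤ |g|_α. -/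
/-- Cantor space `2^ω`. -/
abbrev Cantor : Type := ℕ → Bool

/-- A bit `b` is a correct answer to the question `f A ≲_ε p`. -/
def CorrectAnswer (f : Cantor → ℝ) (A : Cantor) (p ε : ℚ) (b : Bool) : Prop :=
  (b = true ∧ f A < (p : ℝ) + (ε : ℝ)) ∨ (b = false ∧ (p : ℝ) - (ε : ℝ) < f A)

/-- Topological m-reducibility `f ≤_m g`. -/
def MReducible (f g : Cantor → ℝ) : Prop :=
  ∀ p ε : ℚ, 0 < ε → ∃ q δ : ℚ, 0 < δ ∧ ∃ k : Cantor → Cantor, Continuous k ∧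
    ∀ A b, CorrectAnswer g (k A) q δ b → CorrectAnswer f A p ε b

/-- `f` is Baire class 1: a pointwise limit of continuous functions. -/
def BaireOne (f : Cantor → ℝ) : Prop :=
  ∃ F : ℕ → Cantor → ℝ, (∀ n, Continuous (F n)) ∧
    ∀ A, Filter.Tendsto (fun n => F n A) Filter.atTop (nhds (f A))

/-- The Bourgain derivation sequence `P^ν_{f,p,ε}`. -/
noncomputable def derivSeq (f : Cantor → ℝ) (p ε : ℚ) (ν : Ordinal.{0}) : Set Cantor :=
  Ordinal.limitRecOn ν Set.univ
    (fun _ P => P \ ⋃₀ {U : Set Cantor | IsOpen U ∧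
        (f '' (P ∩ U) ⊆ Set.Iio ((p : ℝ) + (ε : ℝ)) ∨
         f '' (P ∩ U) ⊆ Set.Ioi ((p : ℝ) - (ε : ℝ)))})
    (fun o _ ih => ⋂ (μ : {μ : Ordinal.{0} // μ < o}), ih μ.1 μ.2)

/-- `α(f,p,ε)`: the least ordinal `ν` with `P^ν_{f,p,ε} = ∅`. -/
noncomputable def bAlpha (f : Cantor → ℝ) (p ε : ℚ) : Ordinal.{0} :=
  sInf {ν | derivSeq f p ε ν = ∅}

/-- The Bourgain rank `|f|_α`. -/
noncomputable def bourgainRank (f : Cantor → ℝ) : Ordinal.{0} :=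
  ⨆ x : ℚ × {ε : ℚ // 0 < ε}, bAlpha f x.1 x.2.1

/-!
A continuous reduction `k` pulls every open set `U` on which `g` has a uniform answer back to
an open set `k⁻¹ U` on which `f` has one, so by induction each derivative of `f` lies in the
preimage of the corresponding derivative of `g`. The sequence for `g` reaches `∅` because `g`
is Baire 1: on a nonempty closed `P`, the Baire category theorem gives an open piece of `P` on
which `g` oscillates by less than `δ`, so every nonempty derivative strictly shrinks, while no
family of subsets of `2^ω` indexed by all ordinals is strictly decreasing.
-/

open Set Filter Topology Metric

section BaireCategory

variable {X : Type*} [TopologicalSpace X] [BaireSpace X] [Nonempty X]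
  {F : ℕ → X → ℝ} {g : X → ℝ}

theorem exists_isOpen_nonempty_forall_dist_le_of_tendsto (hF : ∀ n, Continuous (F n))
    (hFg : ∀ x, Tendsto (F · x) atTop (𝓝 (g x))) {c : ℝ} (hc : 0 < c) :
    ∃ n, ∃ V : Set X, IsOpen V ∧ V.Nonempty ∧ ∀ x ∈ V, dist (g x) (F n x) ≤ c := by
  set E : ℕ → Set X := fun n => {x | ∀ m ≥ n, dist (F m x) (F n x) ≤ c}
  have hE_closed (n : ℕ) : IsClosed (E n) := by
    simp only [E, ofPred_forall]
    exact isClosed_iInter fun m => isClosed_iInter fun _ =>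
      isClosed_le ((hF m).dist (hF n)) continuous_const
  have hE_cover : ⋃ n, E n = univ := by
    refine eq_univ_of_forall fun x => mem_iUnion.2 ?_
    obtain ⟨n, hn⟩ := Metric.cauchySeq_iff'.1 (hFg x).cauchySeq c hc
    exact ⟨n, fun m hm => (hn m hm).le⟩
  obtain ⟨n, hn⟩ := nonempty_interior_of_iUnion_of_closed hE_closed hE_cover
  refine ⟨n, interior (E n), isOpen_interior, hn, fun x hx => ?_⟩
  exact le_of_tendsto ((hFg x).dist tendsto_const_nhds)
    (eventually_atTop.2 ⟨n, interior_subset hx⟩)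

theorem exists_isOpen_mem_forall_dist_lt_of_tendsto (hF : ∀ n, Continuous (F n))
    (hFg : ∀ x, Tendsto (F · x) atTop (𝓝 (g x))) {c : ℝ} (hc : 0 < c) :
    ∃ x₀, ∃ V : Set X, IsOpen V ∧ x₀ ∈ V ∧ ∀ x ∈ V, dist (g x) (g x₀) < c := by
  obtain ⟨n, V, hV, ⟨x₀, hx₀⟩, hgF⟩ :=
    exists_isOpen_nonempty_forall_dist_le_of_tendsto hF hFg (c := c / 3) (by positivity)
  refine ⟨x₀, V ∩ F n ⁻¹' ball (F n x₀) (c / 3), hV.inter (isOpen_ball.preimage (hF n)),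
    ⟨hx₀, mem_ball_self (by positivity)⟩, fun x ⟨hxV, hxB⟩ => ?_⟩
  have hx := hgF x hxV
  have hx₀' := hgF x₀ hx₀
  rw [mem_preimage, mem_ball] at hxB
  calc dist (g x) (g x₀) ≤ dist (g x) (F n x) + dist (F n x) (F n x₀) + dist (F n x₀) (g x₀) :=
        dist_triangle4 _ _ _ _
    _ < c := by rw [dist_comm (F n x₀)] at *; linarith

end BaireCategory

def HasUniformAnswer (f : Cantor → ℝ) (p ε : ℚ) (S : Set Cantor) : Prop :=
  ∃ b, ∀ A ∈ S, CorrectAnswer f A p ε b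

section HasUniformAnswer

variable {f g : Cantor → ℝ} {p q ε δ : ℚ} {S T : Set Cantor}

theorem hasUniformAnswer_iff :
    HasUniformAnswer f p ε S ↔
      f '' S ⊆ Iio ((p : ℝ) + (ε : ℝ)) ∨ f '' S ⊆ Ioi ((p : ℝ) - (ε : ℝ)) := by
  simp [HasUniformAnswer, CorrectAnswer, subset_def, or_comm]

theorem HasUniformAnswer.mono (h : HasUniformAnswer f p ε T) (hST : S ⊆ T) :
    HasUniformAnswer f p ε S :=
  h.imp fun _ hb A hA => hb A (hST hA)

theorem HasUniformAnswer.preimage {k : Cantor → Cantor}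
    (h : ∀ A b, CorrectAnswer g (k A) q δ b → CorrectAnswer f A p ε b)
    (hT : HasUniformAnswer g q δ T) : HasUniformAnswer f p ε (k ⁻¹' T) :=
  hT.imp fun b hb A hA => h A b (hb (k A) hA)

theorem hasUniformAnswer_of_forall_dist_lt (A₀ : Cantor)
    (hS : ∀ A ∈ S, dist (f A) (f A₀) < ε) : HasUniformAnswer f p ε S := by
  rcases le_or_gt (f A₀) p with hle | hgt
  · exact ⟨true, fun A hA => Or.inl ⟨rfl, by linarith [(abs_lt.1 (hS A hA)).2]⟩⟩
  · exact ⟨false, fun A hA => Or.inr ⟨rfl, by linarith [(abs_lt.1 (hS A hA)).1]⟩⟩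

theorem BaireOne.exists_mem_isOpen_hasUniformAnswer (hg : BaireOne g) (hδ : 0 < δ)
    {P : Set Cantor} (hP : IsClosed P) (hne : P.Nonempty) :
    ∃ A ∈ P, ∃ U, IsOpen U ∧ A ∈ U ∧ HasUniformAnswer g q δ (P ∩ U) := by
  obtain ⟨F, hF, hFg⟩ := hg
  have : Nonempty P := hne.to_subtype
  have : CompactSpace P := isCompact_iff_compactSpace.1 hP.isCompact
  obtain ⟨A₀, V, hV, hA₀, hgV⟩ := exists_isOpen_mem_forall_dist_lt_of_tendsto (g := g ∘ ((↑) : P → Cantor))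
    (fun n => (hF n).comp continuous_subtype_val) (fun A => hFg A)
    (by exact_mod_cast hδ : (0 : ℝ) < δ)
  obtain ⟨U, hU, rfl⟩ := isOpen_induced_iff.1 hV
  exact ⟨A₀, A₀.2, U, hU, hA₀,
    hasUniformAnswer_of_forall_dist_lt A₀ fun A ⟨hAP, hAU⟩ => hgV ⟨A, hAP⟩ hAU⟩

end HasUniformAnswer

section derivSeq

variable {f g : Cantor → ℝ} {p q ε δ : ℚ}

@[simp]
theorem derivSeq_zero : derivSeq f p ε 0 = univ :=
  Ordinal.limitRecOn_zero _ _ _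

theorem mem_derivSeq_add_one {ν : Ordinal} {A : Cantor} :
    A ∈ derivSeq f p ε (ν + 1) ↔ A ∈ derivSeq f p ε ν ∧
      ∀ U, IsOpen U → A ∈ U → ¬HasUniformAnswer f p ε (derivSeq f p ε ν ∩ U) := by
  rw [derivSeq, Ordinal.limitRecOn_add_one, ← derivSeq]
  simp only [hasUniformAnswer_iff, Set.mem_sdiff, mem_sUnion, mem_ofPred_eq, not_exists, not_and]
  grind

theorem derivSeq_limit {ν : Ordinal} (hν : Order.IsSuccLimit ν) :
    derivSeq f p ε ν = ⋂ μ : Iio ν, derivSeq f p ε μ :=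
  Ordinal.limitRecOn_limit _ _ _ _ hν

theorem derivSeq_add_one_subset (ν : Ordinal) : derivSeq f p ε (ν + 1) ⊆ derivSeq f p ε ν :=
  fun _ hA => (mem_derivSeq_add_one.1 hA).1

theorem derivSeq_antitone : Antitone (derivSeq f p ε) := by
  intro μ ν hμν
  induction ν using Ordinal.limitRecOn with
  | zero => rw [nonpos_iff_eq_zero.1 hμν]
  | add_one ν ih =>
    rcases hμν.lt_or_eq with hlt | rfl
    · exact (derivSeq_add_one_subset ν).trans (ih (Order.lt_add_one_iff.1 hlt))
    · rfl
  | limit ν hν _ =>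
    rcases hμν.lt_or_eq with hlt | rfl
    · rw [derivSeq_limit hν]
      exact iInter_subset (fun μ : Iio ν => derivSeq f p ε μ) ⟨μ, hlt⟩
    · rfl

theorem isClosed_derivSeq (ν : Ordinal) : IsClosed (derivSeq f p ε ν) := by
  induction ν using Ordinal.limitRecOn with
  | zero => simp
  | add_one ν ih =>
    rw [derivSeq, Ordinal.limitRecOn_add_one, ← derivSeq]
    exact ih.sdiff (isOpen_sUnion fun U hU => hU.1)
  | limit ν hν ih =>
    rw [derivSeq_limit hν]
    exact isClosed_iInter fun μ => ih μ μ.2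

theorem derivSeq_subset_preimage_of_reduction {k : Cantor → Cantor} (hk : Continuous k)
    (h : ∀ A b, CorrectAnswer g (k A) q δ b → CorrectAnswer f A p ε b) (ν : Ordinal) :
    derivSeq f p ε ν ⊆ k ⁻¹' derivSeq g q δ ν := by
  induction ν using Ordinal.limitRecOn with
  | zero => simp
  | add_one ν ih =>
    intro A hA
    rw [mem_derivSeq_add_one] at hA
    refine mem_derivSeq_add_one.2 ⟨ih hA.1, fun U hU hAU hgU => ?_⟩
    refine hA.2 (k ⁻¹' U) (hU.preimage hk) hAU ((hgU.preimage h).mono ?_)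
    exact fun B ⟨hBf, hBU⟩ => ⟨ih hBf, hBU⟩
  | limit ν hν ih =>
    rw [derivSeq_limit hν, derivSeq_limit hν, preimage_iInter]
    exact iInter_mono fun μ => ih μ μ.2

theorem BaireOne.derivSeq_add_one_ssubset (hg : BaireOne g) (hδ : 0 < δ) {ν : Ordinal}
    (hne : (derivSeq g q δ ν).Nonempty) : derivSeq g q δ (ν + 1) ⊂ derivSeq g q δ ν := by
  obtain ⟨A, hA, U, hU, hAU, hgU⟩ :=
    hg.exists_mem_isOpen_hasUniformAnswer hδ (isClosed_derivSeq ν) hne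
  refine (ssubset_iff_of_subset (derivSeq_add_one_subset ν)).2 ⟨A, hA, fun hA' => ?_⟩
  exact (mem_derivSeq_add_one.1 hA').2 U hU hAU hgU

theorem BaireOne.exists_derivSeq_eq_empty (hg : BaireOne g) (hδ : 0 < δ) :
    ∃ ν, derivSeq g q δ ν = ∅ := by
  by_contra! hne
  have hanti : StrictAnti (derivSeq g q δ) := fun μ ν hlt =>
    (derivSeq_antitone (Order.add_one_le_of_lt hlt)).trans_ssubset
      (hg.derivSeq_add_one_ssubset hδ (hne μ))
  exact not_injective_of_ordinal _ hanti.injective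

theorem derivSeq_bAlpha (h : ∃ ν, derivSeq f p ε ν = ∅) : derivSeq f p ε (bAlpha f p ε) = ∅ :=
  csInf_mem (s := {ν | derivSeq f p ε ν = ∅}) h

theorem bAlpha_le {ν : Ordinal} (h : derivSeq f p ε ν = ∅) : bAlpha f p ε ≤ ν :=
  csInf_le' h

end derivSeq

section Reduction

variable {f g : Cantor → ℝ} {p q ε δ : ℚ} {k : Cantor → Cantor}

theorem derivSeq_eq_empty_of_reduction (hk : Continuous k)
    (h : ∀ A b, CorrectAnswer g (k A) q δ b → CorrectAnswer f A p ε b) {ν : Ordinal}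
    (hν : derivSeq g q δ ν = ∅) : derivSeq f p ε ν = ∅ := by
  simpa [hν] using derivSeq_subset_preimage_of_reduction hk h ν

theorem bAlpha_le_of_reduction (hg : BaireOne g) (hδ : 0 < δ) (hk : Continuous k)
    (h : ∀ A b, CorrectAnswer g (k A) q δ b → CorrectAnswer f A p ε b) :
    bAlpha f p ε ≤ bAlpha g q δ :=
  bAlpha_le <| derivSeq_eq_empty_of_reduction hk h <| derivSeq_bAlpha <|
    hg.exists_derivSeq_eq_empty hδ

theorem bourgainRank_le_of_mReducible (hg : BaireOne g) (hfg : MReducible f g) :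
    bourgainRank f ≤ bourgainRank g := by
  refine Ordinal.iSup_le fun ⟨p, ε, hε⟩ => ?_
  obtain ⟨q, δ, hδ, k, hk, h⟩ := hfg p ε hε
  exact (bAlpha_le_of_reduction hg hδ hk h).trans
    (Ordinal.le_iSup (fun x : ℚ × {ε : ℚ // 0 < ε} => bAlpha g x.1 x.2.1) (q, ⟨δ, hδ⟩))

end Reduction

theorem derivSeq_subset_of_reduction_general (f g : Cantor → ℝ) (hg : BaireOne g) (p q ε δ : ℚ)
    (hδ : 0 < δ) (k : Cantor → Cantor) (hk : Continuous k)
    (h : ∀ A b, CorrectAnswer g (k A) q δ b → CorrectAnswer f A p ε b) :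
    (∀ ν : Ordinal, derivSeq f p ε ν ⊆ k ⁻¹' derivSeq g q δ ν) ∧
    (∃ ν : Ordinal, derivSeq f p ε ν = ∅) ∧
    bAlpha f p ε ≤ bAlpha g q δ ∧
    (BaireOne f → MReducible f g → bourgainRank f ≤ bourgainRank g) := by
  obtain ⟨ν, hν⟩ := hg.exists_derivSeq_eq_empty (q := q) hδ
  exact ⟨derivSeq_subset_preimage_of_reduction hk h,
    ⟨ν, derivSeq_eq_empty_of_reduction hk h hν⟩,
    bAlpha_le_of_reduction hg hδ hk h,
    fun _ => bourgainRank_le_of_mReducible hg⟩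

/-- If a single-question reduction transfers correct answers about `g(k A) ≲_δ q` to
correct answers about `f A ≲_ε p`, then the derivation sequences compare:
`P^ν_{f,p,ε} ⊆ k⁻¹(P^ν_{g,q,δ})`, the sequence for `f` reaches `∅`,
`α(f,p,ε) ≤ α(g,q,δ)`; consequently if `f` is Baire 1 and `f ≤_m g` then
`|f|_α ≤ |g|_α`. -/
theorem derivSeq_subset_of_reduction (f g : Cantor → ℝ) (hg : BaireOne g) (p q ε δ : ℚ)
    (hε : 0 < ε) (hδ : 0 < δ) (k : Cantor → Cantor) (hk : Continuous k)
    (h : ∀ A b, CorrectAnswer g (k A) q δ b → CorrectAnswer f A p ε b) :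
    (∀ ν : Ordinal, derivSeq f p ε ν ⊆ k ⁻¹' derivSeq g q δ ν) ∧
    (∃ ν : Ordinal, derivSeq f p ε ν = ∅) ∧
    bAlpha f p ε ≤ bAlpha g q δ ∧
    (BaireOne f → MReducible f g → bourgainRank f ≤ bourgainRank g) :=
  derivSeq_subset_of_reduction_general f g hg p q ε δ hδ k hk h
end

section
/- Let f, g : 2^ω → ℝ be Baire 1 functions. Then f ≤_tt1 g if and only if |f|_α ≤ |g|_α. -/
/-- Topological `tt1`-reducibility: one oracle question about `g`, together with the
first `r` bits of the input, determine the answer via a truth table. -/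
def TT1Reducible (f g : Cantor → ℝ) : Prop :=
  ∀ p ε : ℚ, 0 < ε → ∃ (k : Cantor → Cantor) (q δ : ℚ) (r : ℕ)
    (h : (Fin r → Bool) → Bool → Bool),
    Continuous k ∧ 0 < δ ∧
    ∀ (A : Cantor) (b : Bool), CorrectAnswer g (k A) q δ b →
      CorrectAnswer f A p ε (h (fun i : Fin r => A i) b)

/-!
Both directions compare the derivatives `P^ν` of abstract answer relations. On each cylinder of
its first `r` bits, a tt1-reduction is a continuous map transporting correct answers up to a
relabelling, and such maps push `P^ν(f)` into `P^ν(g)`; hence `α(f,p,ε) ≤ α(g,q,δ)`.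

Conversely, Baire category on the closed sets `P^ν` makes the derivation of a Baire 1 function
terminate, and compactness makes `α(f,p,ε) = β + 1` a successor. Since `β < |g|_α`, some band
`(q,δ)` has `P^β(g) ≠ ∅`, and after narrowing the band a point `w ∈ P^β(g)` answers only one way.
By induction on `ν`, a clopen set missing `P^ν(f)` m-reduces to `g` by a map into any cylinder
around a point of `P^ν(g)`: at a successor, cut the set into cylinders on which `f` is one-sided
on `P^ν`, send their points of `P^ν` to a nearby point of `P^ν(g)` forcing the same answer, and
reduce the clopen rings around `P^ν` at level `ν`. At level `β`, relabelling answers per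
cylinder lets `w` serve every cylinder, which is the tt1-reduction.
-/

open Set Filter Topology PiNat

section Cylinders

theorem prefix_eq_prefix_iff {α : Type*} {x y : ℕ → α} {n : ℕ} :
    (fun i : Fin n => y i) = (fun i : Fin n => x i) ↔ y ∈ cylinder x n := by
  simp only [funext_iff, Fin.forall_iff, mem_cylinder_iff]

theorem continuous_prefix {α : Type*} [TopologicalSpace α] (n : ℕ) :
    Continuous fun x : ℕ → α => fun i : Fin n => x i :=
  continuous_pi fun i => continuous_apply (i : ℕ)

variable {α : Type*} [TopologicalSpace α] [DiscreteTopology α]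

theorem nhds_hasBasis_cylinder (x : ℕ → α) : (𝓝 x).HasBasis (fun _ : ℕ => True) (cylinder x) := by
  refine ⟨fun U => ⟨fun hU => ?_, fun ⟨n, _, hn⟩ => mem_of_superset
    ((isOpen_cylinder _ x n).mem_nhds (self_mem_cylinder x n)) hn⟩⟩
  obtain ⟨_, ⟨⟨y, n, rfl⟩, hx⟩, hU⟩ := (isTopologicalBasis_cylinders _).nhds_hasBasis.mem_iff.1 hU
  exact ⟨n, trivial, (mem_cylinder_iff_eq.1 hx).symm ▸ hU⟩

theorem isClopen_of_forall_cylinder_subset {S : Set (ℕ → α)} {n : ℕ}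
    (hS : ∀ x ∈ S, cylinder x n ⊆ S) : IsClopen S := by
  refine ⟨⟨isOpen_iff_mem_nhds.2 fun x hx => ?_⟩, isOpen_iff_mem_nhds.2 fun x hx => ?_⟩
  · refine mem_of_superset ((isOpen_cylinder _ x n).mem_nhds (self_mem_cylinder x n)) ?_
    intro y hy hyS
    exact hx (hS y hyS ((mem_cylinder_comm x y n).1 hy))
  · exact mem_of_superset ((isOpen_cylinder _ x n).mem_nhds (self_mem_cylinder x n)) (hS x hx)

theorem continuous_of_prefix {β : Type*} [TopologicalSpace β] {n : ℕ}
    {K : (Fin n → α) → (ℕ → α) → β} (hK : ∀ σ, Continuous (K σ)) :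
    Continuous fun x => K (fun i : Fin n => x i) x :=
  (continuous_prod_of_discrete_left.2 hK :
    Continuous fun p : (Fin n → α) × (ℕ → α) => K p.1 p.2).comp
      ((continuous_prefix n).prodMk continuous_id)

theorem isClopen_prefix_eq {L : ℕ} (σ : Fin L → α) :
    IsClopen {x : ℕ → α | (fun i : Fin L => x i) = σ} :=
  (isClopen_discrete {σ}).preimage (continuous_prefix L)

theorem IsCompact.lebesgue_number_cylinder {K : Set (ℕ → α)} (hK : IsCompact K)
    {S : Set (ℕ → α) → Prop} (hS : ∀ ⦃U V⦄, V ⊆ U → S U → S V)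
    (hloc : ∀ x ∈ K, ∃ U ∈ 𝓝 x, S U) : ∃ n, ∀ x ∈ K, S (cylinder x n) := by
  have hev : ∀ x ∈ K, {p : (ℕ → α) × ℕ | S (cylinder p.1 p.2)} ∈ 𝓝 x ×ˢ atTop := by
    intro x hx
    obtain ⟨U, hU, hSU⟩ := hloc x hx
    obtain ⟨m, -, hm⟩ := (nhds_hasBasis_cylinder x).mem_iff.1 hU
    filter_upwards [prod_mem_prod ((isOpen_cylinder _ x m).mem_nhds (self_mem_cylinder x m))
      (Ici_mem_atTop m)] with ⟨y, n⟩ ⟨hy, hn⟩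
    exact hS ((cylinder_anti y hn).trans ((mem_cylinder_iff_eq.1 hy).subset.trans hm)) hSU
  obtain ⟨t, ht, u, hu, htu⟩ := mem_prod_iff.1 (hK.mem_nhdsSet_prod_of_forall hev)
  obtain ⟨n, hn⟩ := mem_atTop_sets.1 hu
  exact ⟨n, fun x hx => htu (mk_mem_prod (subset_of_mem_nhdsSet ht hx) (hn n le_rfl))⟩

theorem IsCompact.exists_forall_prefix {β : Type*} [Nonempty β] {Q : (ℕ → α) → β → Prop}
    {K : Set (ℕ → α)} (hK : IsCompact K) (hloc : ∀ A ∈ K, ∃ U ∈ 𝓝 A, ∃ b, ∀ B ∈ K ∩ U, Q B b) :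
    ∃ L, ∃ bit : (Fin L → α) → β, ∀ A ∈ K, Q A (bit fun i => A i) := by
  obtain ⟨L, hL⟩ := hK.lebesgue_number_cylinder
    (S := fun U => ∃ b, ∀ B ∈ K ∩ U, Q B b)
    (fun U V hVU ⟨b, hb⟩ => ⟨b, fun B hB => hb B ⟨hB.1, hVU hB.2⟩⟩) hloc
  have hσ : ∀ σ : Fin L → α, ∃ b, ∀ A ∈ K, (fun i : Fin L => A i) = σ → Q A b := by
    intro σ
    by_cases h : ∃ A ∈ K, (fun i : Fin L => A i) = σ
    · obtain ⟨A₀, hA₀, rfl⟩ := h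
      obtain ⟨b, hb⟩ := hL A₀ hA₀
      exact ⟨b, fun A hA hAσ => hb A ⟨hA, prefix_eq_prefix_iff.1 hAσ⟩⟩
    · push Not at h
      exact ⟨Classical.arbitrary β, fun A hA hAσ => absurd hAσ (h A hA)⟩
  choose bit hbit using hσ
  exact ⟨L, bit, fun A hA => hbit _ A hA rfl⟩

variable {γ : Type*} [TopologicalSpace γ] [DiscreteTopology γ] {P : Set (ℕ → α)}

theorem shortestPrefixDiff_eq_iff (hP : IsClosed P) {x : ℕ → α} (hx : x ∉ P) {j : ℕ} :
    shortestPrefixDiff x P = j ↔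
      Disjoint P (cylinder x j) ∧ ∀ i < j, ¬ Disjoint P (cylinder x i) := by
  classical
  rw [shortestPrefixDiff, dif_pos (exists_disjoint_cylinder hP hx), Nat.find_eq_iff]

theorem disjoint_cylinder_shortestPrefixDiff (hP : IsClosed P) {x : ℕ → α} (hx : x ∉ P) :
    Disjoint P (cylinder x (shortestPrefixDiff x P)) :=
  ((shortestPrefixDiff_eq_iff hP hx).1 rfl).1

theorem isClopen_shortestPrefixDiff_eq (hP : IsClosed P) (j : ℕ) :
    IsClopen {x | x ∉ P ∧ shortestPrefixDiff x P = j} := by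
  refine isClopen_of_forall_cylinder_subset (n := j) fun x ⟨hx, hxj⟩ y hy => ?_
  have hcyl : ∀ i ≤ j, cylinder y i = cylinder x i := fun i hi =>
    mem_cylinder_iff_eq.1 (cylinder_anti x hi hy)
  rw [shortestPrefixDiff_eq_iff hP hx] at hxj
  have hyP : y ∉ P := fun hyP => hxj.1.notMem_of_mem_left hyP hy
  refine ⟨hyP, (shortestPrefixDiff_eq_iff hP hyP).2 ⟨?_, fun i hi => ?_⟩⟩
  · rw [hcyl j le_rfl]; exact hxj.1
  · rw [hcyl i hi.le]; exact hxj.2 i hi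

theorem continuous_ite_shortestPrefixDiff (hP : IsClosed P) [DecidablePred (· ∈ P)]
    (z : ℕ → γ) {K : ℕ → (ℕ → α) → ℕ → γ} (hK : ∀ j, Continuous (K j))
    (hKz : ∀ j x, K j x ∈ cylinder z j) :
    Continuous fun x => if x ∈ P then z else K (shortestPrefixDiff x P) x := by
  refine continuous_iff_continuousAt.2 fun a => ?_
  by_cases ha : a ∈ P
  · simp only [ContinuousAt, if_pos ha]
    refine ((nhds_hasBasis_cylinder a).tendsto_iff (nhds_hasBasis_cylinder z)).2
      fun M _ => ⟨M, trivial, fun x hx => ?_⟩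
    by_cases hxP : x ∈ P
    · simp only [if_pos hxP, self_mem_cylinder]
    rw [if_neg hxP]
    refine cylinder_anti z (not_lt.1 fun hlt => ?_) (hKz _ x)
    exact (disjoint_cylinder_shortestPrefixDiff hP hxP).notMem_of_mem_left ha
      (cylinder_anti x hlt.le ((mem_cylinder_comm a x M).1 hx))
  · refine (hK (shortestPrefixDiff a P)).continuousAt.congr
      (eventuallyEq_of_mem ((isClopen_shortestPrefixDiff_eq hP _).isOpen.mem_nhds ⟨ha, rfl⟩) ?_)
    rintro x ⟨hx, hxj⟩
    simp only [if_neg hx, hxj]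

end Cylinders

section Derivation

variable {X Y : Type*} [TopologicalSpace X] [TopologicalSpace Y]

/-- `Q x b` reads "`b` is a correct answer at `x`"; `derivSeq f p ε` is the case
`Q = (CorrectAnswer f · p ε)`. -/
noncomputable def bourgainDeriv (Q : X → Bool → Prop) (ν : Ordinal.{0}) : Set X :=
  Ordinal.limitRecOn ν univ
    (fun _ P => P \ ⋃₀ {U | IsOpen U ∧ ∃ b, ∀ x ∈ P ∩ U, Q x b})
    (fun o _ ih => ⋂ (μ : {μ : Ordinal.{0} // μ < o}), ih μ.1 μ.2)

variable {Q : X → Bool → Prop} {R : Y → Bool → Prop}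

@[simp]
theorem bourgainDeriv_zero : bourgainDeriv Q 0 = univ :=
  Ordinal.limitRecOn_zero _ _ _

theorem bourgainDeriv_add_one (ν : Ordinal) : bourgainDeriv Q (ν + 1) =
    bourgainDeriv Q ν \ ⋃₀ {U | IsOpen U ∧ ∃ b, ∀ x ∈ bourgainDeriv Q ν ∩ U, Q x b} :=
  Ordinal.limitRecOn_add_one _ _ _ _

theorem bourgainDeriv_limit {o : Ordinal} (ho : Order.IsSuccLimit o) :
    bourgainDeriv Q o = ⋂ (μ : {μ : Ordinal // μ < o}), bourgainDeriv Q μ.1 :=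
  Ordinal.limitRecOn_limit _ _ _ _ ho

theorem mem_bourgainDeriv_add_one {x : X} {ν : Ordinal} :
    x ∈ bourgainDeriv Q (ν + 1) ↔ x ∈ bourgainDeriv Q ν ∧
      ∀ U, IsOpen U → x ∈ U → ∀ b, ∃ y ∈ bourgainDeriv Q ν ∩ U, ¬ Q y b := by
  rw [bourgainDeriv_add_one, Set.mem_sdiff]
  refine and_congr_right fun _ => ⟨fun h U hU hxU b => ?_, fun h ⟨U, ⟨hU, b, hb⟩, hxU⟩ => ?_⟩
  · by_contra! hb
    exact h ⟨U, ⟨hU, b, hb⟩, hxU⟩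
  · obtain ⟨y, hy, hQy⟩ := h U hU hxU b
    exact hQy (hb y hy)

theorem exists_nhds_forall_of_notMem_bourgainDeriv_add_one {ν : Ordinal} {x : X}
    (hx : x ∈ bourgainDeriv Q ν) (hx' : x ∉ bourgainDeriv Q (ν + 1)) :
    ∃ U ∈ 𝓝 x, ∃ b, ∀ y ∈ bourgainDeriv Q ν ∩ U, Q y b := by
  by_contra! h
  refine hx' (mem_bourgainDeriv_add_one.2 ⟨hx, fun U hU hxU b => ?_⟩)
  obtain ⟨y, hy, hQy⟩ := h U (hU.mem_nhds hxU) b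
  exact ⟨y, hy, hQy⟩

theorem isClosed_bourgainDeriv (ν : Ordinal) : IsClosed (bourgainDeriv Q ν) := by
  induction ν using Ordinal.limitRecOn with
  | zero => simp
  | add_one ν ih => rw [bourgainDeriv_add_one]; exact ih.sdiff (isOpen_sUnion fun U hU => hU.1)
  | limit o ho ih => rw [bourgainDeriv_limit ho]; exact isClosed_iInter fun μ => ih μ.1 μ.2

theorem bourgainDeriv_anti {μ ν : Ordinal} (h : μ ≤ ν) :
    bourgainDeriv Q ν ⊆ bourgainDeriv Q μ := by
  induction ν using Ordinal.limitRecOn with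
  | zero => rw [nonpos_iff_eq_zero.1 h]
  | add_one ν ih =>
    rcases h.lt_or_eq with h | rfl
    · rw [bourgainDeriv_add_one]; exact sdiff_subset.trans (ih (Order.lt_succ_iff.1 h))
    · rfl
  | limit o ho ih =>
    rcases h.lt_or_eq with h | rfl
    · rw [bourgainDeriv_limit ho]; exact iInter_subset_of_subset ⟨μ, h⟩ subset_rfl
    · rfl

theorem inter_bourgainDeriv_subset_preimage {k : X → Y} (hk : Continuous k) {V : Set X}
    (hV : IsOpen V) {τ : Bool → Bool} (hred : ∀ x ∈ V, ∀ b, R (k x) b → Q x (τ b))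
    (ν : Ordinal) : V ∩ bourgainDeriv Q ν ⊆ k ⁻¹' bourgainDeriv R ν := by
  induction ν using Ordinal.limitRecOn with
  | zero => simp
  | add_one ν ih =>
    rintro x ⟨hxV, hx⟩
    rw [mem_bourgainDeriv_add_one] at hx
    refine mem_bourgainDeriv_add_one.2 ⟨ih ⟨hxV, hx.1⟩, fun U hU hkx b => ?_⟩
    by_contra! hR
    obtain ⟨y, ⟨hy, hyV, hyU⟩, hQy⟩ :=
      hx.2 (V ∩ k ⁻¹' U) (hV.inter (hU.preimage hk)) ⟨hxV, hkx⟩ (τ b)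
    exact hQy (hred y hyV b (hR (k y) ⟨ih ⟨hyV, hy⟩, hyU⟩))
  | limit o ho ih =>
    rintro x ⟨hxV, hx⟩
    rw [bourgainDeriv_limit ho, mem_iInter] at hx
    rw [mem_preimage, bourgainDeriv_limit ho, mem_iInter]
    exact fun μ => ih μ.1 μ.2 ⟨hxV, hx μ⟩

theorem bourgainDeriv_subset_of_le {Q' : X → Bool → Prop} (h : Q' ≤ Q) (ν : Ordinal) :
    bourgainDeriv Q ν ⊆ bourgainDeriv Q' ν := by
  simpa using inter_bourgainDeriv_subset_preimage continuous_id isOpen_univ (τ := id)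
    (fun x _ b => h x b) ν

theorem bourgainDeriv_xor (t : Bool) (ν : Ordinal) :
    bourgainDeriv (fun x b => Q x (b ^^ t)) ν = bourgainDeriv Q ν := by
  refine (Subset.antisymm ?_ ?_).symm <;>
    simpa using inter_bourgainDeriv_subset_preimage continuous_id isOpen_univ (τ := (· ^^ t))
      (fun x _ b h => by simpa using h) ν

theorem IsCompact.exists_disjoint_bourgainDeriv_of_isSuccLimit {K : Set X} (hK : IsCompact K)
    {o : Ordinal} (ho : Order.IsSuccLimit o) (h : Disjoint K (bourgainDeriv Q o)) :
    ∃ μ < o, Disjoint K (bourgainDeriv Q μ) := by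
  have : Nonempty {μ : Ordinal // μ < o} := ⟨⟨0, ho.bot_lt⟩⟩
  obtain ⟨μ, hμ⟩ := hK.elim_directed_family_closed (fun μ : {μ // μ < o} => bourgainDeriv Q μ.1)
    (fun μ => isClosed_bourgainDeriv _)
    (by rw [← bourgainDeriv_limit ho, ← disjoint_iff_inter_eq_empty]; exact h)
    (fun μ₁ μ₂ => ⟨⟨max μ₁.1 μ₂.1, max_lt μ₁.2 μ₂.2⟩,
      bourgainDeriv_anti (le_max_left _ _), bourgainDeriv_anti (le_max_right _ _)⟩)
  exact ⟨μ.1, μ.2, disjoint_iff_inter_eq_empty.2 hμ⟩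

end Derivation

section Termination

variable {X : Type*} [TopologicalSpace X] [Small.{0} X] {Q : X → Bool → Prop}

/-- Every nonempty derivative loses a point, and ordinals do not inject into a small type. -/
theorem exists_bourgainDeriv_eq_empty
    (hQ : ∀ P : Set X, IsClosed P → P.Nonempty →
      ∃ U, IsOpen U ∧ (P ∩ U).Nonempty ∧ ∃ b, ∀ x ∈ P ∩ U, Q x b) :
    ∃ ν, bourgainDeriv Q ν = ∅ := by
  by_contra! hne
  have hdrop : ∀ ν, ∃ x ∈ bourgainDeriv Q ν, x ∉ bourgainDeriv Q (ν + 1) := by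
    intro ν
    obtain ⟨U, hU, ⟨x, hx, hxU⟩, b, hb⟩ := hQ _ (isClosed_bourgainDeriv ν) (hne ν)
    refine ⟨x, hx, fun hx' => ?_⟩
    obtain ⟨y, hy, hQy⟩ := (mem_bourgainDeriv_add_one.1 hx').2 U hU hxU b
    exact hQy (hb y hy)
  choose w hw hw' using hdrop
  have hlt : ∀ μ ν, μ < ν → w μ ≠ w ν := fun μ ν hμν h =>
    hw' μ (h ▸ bourgainDeriv_anti (Order.add_one_le_of_lt hμν) (hw ν))
  exact not_injective_of_ordinal w fun μ ν h =>
    le_antisymm (not_lt.1 fun h' => hlt ν μ h' h.symm) (not_lt.1 fun h' => hlt μ ν h' h)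

end Termination

section Answers

variable {f : Cantor → ℝ} {p ε : ℚ}

theorem oneSided_iff_exists_correctAnswer (S : Set Cantor) :
    (f '' S ⊆ Iio ((p : ℝ) + ε) ∨ f '' S ⊆ Ioi ((p : ℝ) - ε)) ↔
      ∃ b, ∀ A ∈ S, CorrectAnswer f A p ε b := by
  simp [subset_def, CorrectAnswer, or_comm]

@[simp]
theorem correctAnswer_true_iff {A : Cantor} : CorrectAnswer f A p ε true ↔ f A < p + ε := by
  simp [CorrectAnswer]

@[simp]
theorem correctAnswer_false_iff {A : Cantor} : CorrectAnswer f A p ε false ↔ p - ε < f A := by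
  simp [CorrectAnswer]

theorem derivSeq_eq_bourgainDeriv (f : Cantor → ℝ) (p ε : ℚ) :
    derivSeq f p ε = bourgainDeriv (CorrectAnswer f · p ε) := by
  funext ν
  simp only [derivSeq, bourgainDeriv, oneSided_iff_exists_correctAnswer]

theorem bAlpha_eq_sInf (f : Cantor → ℝ) (p ε : ℚ) :
    bAlpha f p ε = sInf {ν | bourgainDeriv (CorrectAnswer f · p ε) ν = ∅} := by
  rw [bAlpha, derivSeq_eq_bourgainDeriv]

theorem BaireOne.exists_isOpen_forall_correctAnswer (hf : BaireOne f) (hε : 0 < ε)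
    {P : Set Cantor} (hP : IsClosed P) (hne : P.Nonempty) :
    ∃ U, IsOpen U ∧ (P ∩ U).Nonempty ∧ ∃ b, ∀ A ∈ P ∩ U, CorrectAnswer f A p ε b := by
  obtain ⟨F, hFc, hFf⟩ := hf
  have hε' : (0 : ℝ) < ε := by exact_mod_cast hε
  let I : Bool → Set ℝ := fun b => bif b then Iic (p + ε / 2) else Ici (p - ε / 2)
  have hI : ∀ b, IsClosed (I b) := fun b => by cases b <;> simp [I, isClosed_Iic, isClosed_Ici]
  have hIcorrect : ∀ A b, f A ∈ I b → CorrectAnswer f A p ε b := by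
    intro A b h
    cases b
    · simp only [I, cond_false, mem_Ici] at h
      exact correctAnswer_false_iff.2 (by linarith)
    · simp only [I, cond_true, mem_Iic] at h
      exact correctAnswer_true_iff.2 (by linarith)
  have hev : ∀ A, ∃ b, ∀ᶠ m in atTop, F m A ∈ I b := by
    intro A
    rcases le_or_gt (f A) p with h | h
    · exact ⟨true, (hFf A).eventually (Iic_mem_nhds (by linarith))⟩
    · exact ⟨false, (hFf A).eventually (Ici_mem_nhds (by linarith))⟩
  have : CompactSpace P := isCompact_iff_compactSpace.1 hP.isCompact
  have : Nonempty P := hne.to_subtype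
  let S : ℕ × Bool → Set P := fun nb => ⋂ m ≥ nb.1, (fun A : P => F m A) ⁻¹' I nb.2
  have hS : ∀ nb, IsClosed (S nb) := fun nb =>
    isClosed_biInter fun m _ => (hI nb.2).preimage ((hFc m).comp continuous_subtype_val)
  have hScover : ⋃ nb, S nb = univ := by
    refine eq_univ_of_forall fun A => ?_
    obtain ⟨b, hb⟩ := hev A
    obtain ⟨n, hn⟩ := eventually_atTop.1 hb
    exact mem_iUnion.2 ⟨(n, b), mem_iInter₂.2 hn⟩
  obtain ⟨⟨n, b⟩, A, hA⟩ := nonempty_interior_of_iUnion_of_closed hS hScover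
  obtain ⟨t, htS, ht, hAt⟩ := mem_interior.1 hA
  obtain ⟨U, hU, rfl⟩ := isOpen_induced_iff.1 ht
  refine ⟨U, hU, ⟨A, A.2, hAt⟩, b, fun B hB => hIcorrect B b ?_⟩
  refine (hI b).mem_of_tendsto (hFf B) (eventually_atTop.2 ⟨n, fun m hm => ?_⟩)
  exact mem_iInter₂.1 (htS (show (⟨B, hB.1⟩ : P) ∈ Subtype.val ⁻¹' U from hB.2)) m hm

end Answers

section Construction

variable {Q R : Cantor → Bool → Prop}

def ReducesOn (Q R : Cantor → Bool → Prop) (C : Set Cantor) (k : Cantor → Cantor) : Prop :=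
  ∀ A ∈ C, ∀ b, R (k A) b → Q A b

variable (Q R) in
/-- Landing in an arbitrarily small cylinder around `x` is what makes the gluing in
`exists_reducesOn_of_forall` continuous. -/
def ReductionsExist (ν : Ordinal) : Prop :=
  ∀ C : Set Cantor, IsClopen C → Disjoint C (bourgainDeriv Q ν) → ∀ x ∈ bourgainDeriv R ν,
    ∀ n, ∃ k, Continuous k ∧ (∀ A, k A ∈ cylinder x n) ∧ ReducesOn Q R C k

/-- Send `C ∩ P^ν(Q)` to `z`, and reduce each clopen ring of points whose `j`-cylinder first
misses `P^ν(Q)` into the `(n + j)`-cylinder of `z`. -/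
theorem ReductionsExist.exists_reducesOn_of_forall {ν : Ordinal} (hν : ReductionsExist Q R ν)
    {C : Set Cantor} (hC : IsClopen C) {b : Bool} (hb : ∀ A ∈ C ∩ bourgainDeriv Q ν, Q A b)
    {z : Cantor} (hz : z ∈ bourgainDeriv R ν) (hzb : ¬ R z (!b)) (n : ℕ) :
    ∃ k, Continuous k ∧ (∀ A, k A ∈ cylinder z n) ∧ ReducesOn Q R C k := by
  classical
  set P := bourgainDeriv Q ν
  have hP : IsClosed P := isClosed_bourgainDeriv ν
  choose K hKc hKz hKred using fun j => hν (C ∩ {A | A ∉ P ∧ shortestPrefixDiff A P = j})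
    (hC.inter (isClopen_shortestPrefixDiff_eq hP j))
    (disjoint_left.2 fun A hA => hA.2.1) z hz (n + j)
  refine ⟨fun A => if A ∈ P then z else K (shortestPrefixDiff A P) A,
    continuous_ite_shortestPrefixDiff hP z hKc fun j A => cylinder_anti z (by omega) (hKz j A),
    fun A => ?_, fun A hA b' hb' => ?_⟩
  · dsimp only
    split_ifs
    · exact self_mem_cylinder z n
    · exact cylinder_anti z (by omega) (hKz _ A)
  · by_cases hAP : A ∈ P
    · simp only [if_pos hAP] at hb'
      obtain rfl : b' = b := by
        by_contra hne
        exact hzb (Bool.eq_not_of_ne hne ▸ hb')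
      exact hb A ⟨hA, hAP⟩
    · simp only [if_neg hAP] at hb'
      exact hKred _ A ⟨hA, hAP, rfl⟩ b' hb'

theorem ReductionsExist.add_one {ν : Ordinal} (hν : ReductionsExist Q R ν) :
    ReductionsExist Q R (ν + 1) := by
  intro C hC hCν x hx n
  have hz : ∀ b, ∃ z ∈ bourgainDeriv R ν ∩ cylinder x n, ¬ R z (!b) := fun b =>
    (mem_bourgainDeriv_add_one.1 hx).2 _ (isOpen_cylinder _ x n) (self_mem_cylinder x n) (!b)
  choose z hz hzb using hz
  have hloc : ∀ A ∈ C ∩ bourgainDeriv Q ν,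
      ∃ U ∈ 𝓝 A, ∃ b, ∀ B ∈ (C ∩ bourgainDeriv Q ν) ∩ U, Q B b := fun A hA =>
    (exists_nhds_forall_of_notMem_bourgainDeriv_add_one hA.2 (disjoint_left.1 hCν hA.1)).imp
      fun U ⟨hU, b, hb⟩ => ⟨hU, b, fun B hB => hb B ⟨hB.1.2, hB.2⟩⟩
  obtain ⟨L, bit, hbit⟩ :=
    (hC.isClosed.inter (isClosed_bourgainDeriv ν)).isCompact.exists_forall_prefix hloc
  choose K hKc hKz hKred using fun σ : Fin L → Bool =>
    hν.exists_reducesOn_of_forall (hC.inter (isClopen_prefix_eq σ)) (b := bit σ)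
      (fun A ⟨⟨hAC, hAσ⟩, hA⟩ => hAσ ▸ hbit A ⟨hAC, hA⟩) (hz (bit σ)).1 (hzb (bit σ)) n
  refine ⟨fun A => K (fun i : Fin L => A i) A, continuous_of_prefix hKc, fun A => ?_,
    fun A hA => hKred _ A ⟨hA, rfl⟩⟩
  rw [← mem_cylinder_iff_eq.1 (hz _).2]
  exact hKz _ A

theorem reductionsExist (ν : Ordinal) : ReductionsExist Q R ν := by
  induction ν using Ordinal.limitRecOn with
  | zero =>
    intro C _ hC x _ n
    refine ⟨fun _ => x, continuous_const, fun _ => self_mem_cylinder x n, fun A hA => ?_⟩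
    rw [bourgainDeriv_zero, disjoint_univ] at hC
    exact absurd hA (hC ▸ notMem_empty A)
  | add_one ν ih => exact ih.add_one
  | limit o ho ih =>
    intro C hC hCo x hx n
    obtain ⟨μ, hμ, hCμ⟩ :=
      hC.isClosed.isCompact.exists_disjoint_bourgainDeriv_of_isSuccLimit ho hCo
    exact ih μ hμ C hC hCμ x (bourgainDeriv_anti hμ.le hx) n

/-- Relabelling the answers of `R` per prefix cylinder lets the single point `w` serve as the
target of every cylinder. -/
theorem exists_tt1_of_bourgainDeriv_add_one_eq_empty {β : Ordinal}
    (hQ : bourgainDeriv Q (β + 1) = ∅) {w : Cantor} (hw : w ∈ bourgainDeriv R β) {c : Bool}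
    (hwc : ¬ R w c) :
    ∃ (k : Cantor → Cantor) (r : ℕ) (h : (Fin r → Bool) → Bool → Bool), Continuous k ∧
      ∀ A b, R (k A) b → Q A (h (fun i : Fin r => A i) b) := by
  obtain ⟨L, bit, hbit⟩ := (isClosed_bourgainDeriv β).isCompact.exists_forall_prefix
    fun A hA => exists_nhds_forall_of_notMem_bourgainDeriv_add_one hA (hQ ▸ notMem_empty A)
  let t : (Fin L → Bool) → Bool := fun σ => !bit σ ^^ c
  choose K hKc _ hKred using fun σ : Fin L → Bool =>
    (reductionsExist (Q := Q) (R := fun y b => R y (b ^^ t σ)) β).exists_reducesOn_of_forall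
      (isClopen_prefix_eq σ) (b := bit σ) (fun A ⟨hAσ, hA⟩ => hAσ ▸ hbit A hA)
      (by rwa [bourgainDeriv_xor]) (by simpa [t, ← Bool.xor_assoc] using hwc) 0
  exact ⟨fun A => K (fun i : Fin L => A i) A, L, fun σ b => b ^^ t σ, continuous_of_prefix hKc,
    fun A b hb => hKred _ A rfl _ (by simpa using hb)⟩

end Construction

section Rank

variable {f g : Cantor → ℝ} {p ε : ℚ}

theorem bAlpha_le_of_eq_empty {μ : Ordinal} (h : bourgainDeriv (CorrectAnswer f · p ε) μ = ∅) :
    bAlpha f p ε ≤ μ := by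
  rw [bAlpha_eq_sInf]
  exact csInf_le' h

theorem nonempty_bourgainDeriv_of_lt_bAlpha {μ : Ordinal} (h : μ < bAlpha f p ε) :
    (bourgainDeriv (CorrectAnswer f · p ε) μ).Nonempty :=
  nonempty_iff_ne_empty.2 fun he => (bAlpha_le_of_eq_empty he).not_gt h

theorem bAlpha_le_bourgainRank (f : Cantor → ℝ) (hε : 0 < ε) : bAlpha f p ε ≤ bourgainRank f :=
  Ordinal.le_iSup (fun x : ℚ × {ε : ℚ // 0 < ε} => bAlpha f x.1 x.2.1) (p, ⟨ε, hε⟩)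

theorem BaireOne.bourgainDeriv_bAlpha (hf : BaireOne f) (hε : 0 < ε) :
    bourgainDeriv (CorrectAnswer f · p ε) (bAlpha f p ε) = ∅ := by
  rw [bAlpha_eq_sInf]
  exact csInf_mem (exists_bourgainDeriv_eq_empty fun _ hP hne =>
    hf.exists_isOpen_forall_correctAnswer hε hP hne)

/-- `α(f,p,ε)` is a successor: it is not `0` since `P^0` is the whole space, and not a limit by
compactness. -/
theorem BaireOne.exists_lt_bAlpha_bourgainDeriv_add_one_eq_empty (hf : BaireOne f)
    (hε : 0 < ε) : ∃ β < bAlpha f p ε, bourgainDeriv (CorrectAnswer f · p ε) (β + 1) = ∅ := by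
  have hα := hf.bourgainDeriv_bAlpha (p := p) hε
  rcases Ordinal.zero_or_succ_or_isSuccLimit (bAlpha f p ε) with h0 | ⟨β, hβ⟩ | hlim
  · simp [h0] at hα
  · rw [← hβ, Order.succ_eq_add_one] at hα ⊢
    exact ⟨β, Order.lt_add_one_iff.2 le_rfl, hα⟩
  · obtain ⟨μ, hμ, hμe⟩ := isCompact_univ.exists_disjoint_bourgainDeriv_of_isSuccLimit hlim
      (by rw [hα]; exact disjoint_empty _)
    exact absurd (bAlpha_le_of_eq_empty (univ_disjoint.1 hμe)) hμ.not_ge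

/-- Narrowing the band can only enlarge the derivatives, and a narrow enough band excludes
`g x`. -/
theorem exists_band_not_correctAnswer {q δ : ℚ} (hδ : 0 < δ) {β : Ordinal} {x : Cantor}
    (hx : x ∈ bourgainDeriv (CorrectAnswer g · q δ) β) :
    ∃ c d : ℚ, 0 < d ∧ x ∈ bourgainDeriv (CorrectAnswer g · c d) β ∧
      ∃ b, ¬ CorrectAnswer g x c d b := by
  by_cases hx' : ∃ b, ¬ CorrectAnswer g x q δ b
  · exact ⟨q, δ, hδ, hx, hx'⟩
  push Not at hx'
  obtain ⟨r, hr₁, hr₂⟩ := exists_rat_btwn (correctAnswer_false_iff.1 (hx' false))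
  have hhigh := correctAnswer_true_iff.1 (hx' true)
  have hr : q - δ < r := by exact_mod_cast hr₁
  refine ⟨(q - δ + r) / 2, (r - (q - δ)) / 2, by linarith,
    bourgainDeriv_subset_of_le (fun y b hy => ?_) β hx, true, ?_⟩
  · cases b
    · rw [correctAnswer_false_iff] at hy ⊢
      push_cast at hy
      linarith
    · rw [correctAnswer_true_iff] at hy ⊢
      push_cast at hy
      linarith
  · rw [correctAnswer_true_iff]
    push_cast
    linarith

theorem BaireOne.bourgainRank_le_of_tt1Reducible (hg : BaireOne g) (h : TT1Reducible f g) :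
    bourgainRank f ≤ bourgainRank g := by
  refine Ordinal.iSup_le fun ⟨p, ε, hε⟩ => ?_
  obtain ⟨k, q, δ, r, h, hk, hδ, hred⟩ := h p ε hε
  refine (bAlpha_le_of_eq_empty (μ := bAlpha g q δ)
    (eq_empty_of_forall_notMem fun A hA => ?_)).trans (bAlpha_le_bourgainRank g hδ)
  have hkA := inter_bourgainDeriv_subset_preimage (R := (CorrectAnswer g · q δ)) hk
    (isClopen_prefix_eq fun i : Fin r => A i).isOpen (τ := h fun i : Fin r => A i)
    (fun B hB b hb => hB ▸ hred B b hb) _ ⟨rfl, hA⟩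
  rwa [mem_preimage, hg.bourgainDeriv_bAlpha hδ] at hkA

theorem BaireOne.tt1Reducible_of_bourgainRank_le (hf : BaireOne f)
    (h : bourgainRank f ≤ bourgainRank g) : TT1Reducible f g := by
  intro p ε hε
  obtain ⟨β, hβ, hfβ⟩ := hf.exists_lt_bAlpha_bourgainDeriv_add_one_eq_empty (p := p) hε
  obtain ⟨⟨q, δ, hδ⟩, hβg⟩ :=
    Ordinal.lt_iSup_iff.1 (hβ.trans_le ((bAlpha_le_bourgainRank f hε).trans h))
  obtain ⟨x, hx⟩ := nonempty_bourgainDeriv_of_lt_bAlpha hβg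
  obtain ⟨c, d, hd, hxd, b, hb⟩ := exists_band_not_correctAnswer hδ hx
  obtain ⟨k, r, h, hk, hred⟩ := exists_tt1_of_bourgainDeriv_add_one_eq_empty hfβ hxd hb
  exact ⟨k, c, d, r, h, hk, hd, hred⟩

end Rank

/-- For Baire 1 functions `f, g`, one has `f ≤_tt1 g` iff `|f|_α ≤ |g|_α`. -/
theorem tt1Reducible_iff_bourgainRank_le (f g : Cantor → ℝ) (hf : BaireOne f)
    (hg : BaireOne g) : TT1Reducible f g ↔ bourgainRank f ≤ bourgainRank g :=
  ⟨hg.bourgainRank_le_of_tt1Reducible, hf.tt1Reducible_of_bourgainRank_le⟩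
end
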